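/- arXiv:0808.3023 — 6 statements merged into one kernel-verified Lean document; each statement's English description precedes it below -/
import Mathlib

section
/- If θ is an infinite cardinal and I is a linear order of cardinality greater than 2^θ, then I is θ⁺-wide; that is, there exists a sequence ⟨t_i : i < θ⁺⟩ of elements of I that is either strictly increasing or strictly decreasing (here θ⁺ is the successor cardinal of θ). -/
/-!
Fix a well-order `O` of type `θ⁺`. For every `x ∈ I` run the following game along `O`: keep a
set `T ∋ x` (initially `I`), pick some `p ∈ T` and shrink `T` to the part of `T` on the side
of `p` where `x` lies; at limits intersect. If some `x` is never picked, the picked points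
`p_ξ` lying below `x` increase and those lying above `x` decrease, and one of these two families
has size `θ⁺`. Otherwise every `x` is picked at some stage `ξ`, and is then determined by `ξ`
and the sequence of its answers `compare x p_η` for `η < ξ`; there are at most
`θ⁺ · 3^θ = 2^θ` such data, contradicting `2^θ < #I`.
-/

universe u

open Cardinal Set

namespace WideOrder

variable {I : Type*} [Nonempty I]

noncomputable def pick (T : Set I) : I :=
  Classical.epsilon (· ∈ T)

theorem pick_mem {T : Set I} (h : T.Nonempty) : pick T ∈ T :=
  Classical.epsilon_spec h

variable [LinearOrder I]

def shrink (T : Set I) : Ordering → Set I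
  | .lt => {y ∈ T | y < pick T}
  | .eq => {pick T}
  | .gt => {y ∈ T | pick T < y}

theorem mem_shrink_compare {x : I} {T : Set I} (hx : x ∈ T) :
    x ∈ shrink T (compare x (pick T)) := by
  rcases lt_trichotomy x (pick T) with h | rfl | h
  · rw [compare_lt_iff_lt.2 h]; exact ⟨hx, h⟩
  · rw [compare_eq_iff_eq.2 rfl]; rfl
  · rw [compare_gt_iff_gt.2 h]; exact ⟨hx, h⟩

variable {O : Type*} [LinearOrder O] [WellFoundedLT O]

noncomputable def nest (x : I) : O → Set I :=
  WellFoundedLT.fix fun ξ prev =>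
    ⋂ η, ⋂ h : η < ξ, shrink (prev η h) (compare x (pick (prev η h)))

noncomputable def answer (x : I) (ξ : O) : Ordering :=
  compare x (pick (nest x ξ))

theorem nest_eq (x : I) (ξ : O) : nest x ξ = ⋂ η, ⋂ _ : η < ξ, shrink (nest x η) (answer x η) :=
  WellFoundedLT.fix_eq _ ξ

theorem nest_subset_shrink {x : I} {η ξ : O} (h : η < ξ) :
    nest x ξ ⊆ shrink (nest x η) (answer x η) := by
  rw [nest_eq]
  exact fun y hy => mem_iInter₂.1 hy η h

theorem mem_nest (x : I) (ξ : O) : x ∈ nest x ξ := by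
  induction ξ using WellFoundedLT.induction with
  | ind ξ ih =>
    rw [nest_eq]
    exact mem_iInter₂.2 fun η hη => mem_shrink_compare (ih η hη)

theorem pick_nest_mem (x : I) (ξ : O) : pick (nest x ξ) ∈ nest x ξ :=
  pick_mem ⟨x, mem_nest x ξ⟩

theorem nest_eq_nest_of_answer_eq {x z : I} {ξ : O} (h : ∀ η < ξ, answer x η = answer z η) :
    nest x ξ = nest z ξ := by
  induction ξ using WellFoundedLT.induction with
  | ind ξ ih =>
    rw [nest_eq, nest_eq]
    refine iInter₂_congr fun η hη => ?_
    rw [ih η hη fun η' hη' => h η' (hη'.trans hη), h η hη]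

theorem injective_stage_answers {stage : I → O} (hstage : ∀ x, answer x (stage x) = .eq) :
    Function.Injective fun x =>
      (⟨stage x, fun η => answer x (η : O)⟩ : Σ ξ : O, Iio ξ → Ordering) := by
  intro x z hxz
  have hs : stage x = stage z := congrArg Sigma.fst hxz
  have hnest : nest x (stage x) = nest z (stage z) := by
    rw [← hs]
    refine nest_eq_nest_of_answer_eq fun η hη => ?_
    have := congrArg (fun s : Σ ξ : O, Iio ξ → Ordering =>
      if h : η < s.1 then s.2 ⟨η, h⟩ else .eq) hxz
    simpa [hη, ← hs] using this
  have hx := compare_eq_iff_eq.1 (hstage x)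
  have hz := compare_eq_iff_eq.1 (hstage z)
  rw [hx, hz, hnest]

theorem strictMonoOn_pick_nest (x : I) :
    StrictMonoOn (fun ξ : O => pick (nest x ξ)) {ξ | answer x ξ = .gt} := by
  intro η hη ξ _ hηξ
  have := nest_subset_shrink hηξ (pick_nest_mem x ξ)
  rw [show answer x η = .gt from hη] at this
  exact this.2

theorem strictAntiOn_pick_nest (x : I) :
    StrictAntiOn (fun ξ : O => pick (nest x ξ)) {ξ | answer x ξ = .lt} := by
  intro η hη ξ _ hηξ
  have := nest_subset_shrink hηξ (pick_nest_mem x ξ)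
  rw [show answer x η = .lt from hη] at this
  exact this.2

end WideOrder

theorem Cardinal.le_mk_or_le_mk_of_le_mk_union {α : Type*} {c : Cardinal} (hc : ℵ₀ ≤ c)
    {S T : Set α} (h : c ≤ #(S ∪ T : Set α)) : c ≤ #S ∨ c ≤ #T := by
  by_contra! hST
  exact h.not_gt ((mk_union_le S T).trans_lt (add_lt_of_lt hc hST.1 hST.2))

theorem Cardinal.exists_strictMono_mem_of_le_mk {c : Cardinal} {S : Set c.ord.ToType}
    (hS : c ≤ #S) : ∃ e : c.ord.ToType → c.ord.ToType, StrictMono e ∧ ∀ ξ, e ξ ∈ S := by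
  have htype : Ordinal.type ((· < ·) : c.ord.ToType → c.ord.ToType → Prop)
      ≤ Ordinal.type ((· < ·) : S → S → Prop) := by
    rw [Ordinal.type_toType, ord_le, Ordinal.card_type]
    exact hS
  obtain ⟨e⟩ := Ordinal.type_le_iff'.1 htype
  exact ⟨fun ξ => e ξ, fun _ _ h => e.map_rel_iff.2 h, fun ξ => (e ξ).2⟩

theorem Cardinal.mk_sigma_Iio_arrow_ordering_le {θ : Cardinal.{u}} (hθ : ℵ₀ ≤ θ) :
    #(Σ ξ : (Order.succ θ).ord.ToType, Iio ξ → Ordering) ≤ 2 ^ θ := by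
  have hfun (ξ : (Order.succ θ).ord.ToType) : #(Iio ξ → Ordering) ≤ 2 ^ θ := by
    have hξ : #(Iio ξ) ≤ θ := Order.lt_succ_iff.1 (by simpa using mk_Iio_lt ξ (by simp))
    calc #(Iio ξ → Ordering) = (Fintype.card Ordering : Cardinal) ^ #(Iio ξ) := by simp
      _ ≤ θ ^ #(Iio ξ) := power_le_power_right (natCast_lt_aleph0.le.trans hθ)
      _ ≤ θ ^ θ := power_le_power_left (aleph0_pos.trans_le hθ).ne' hξ
      _ = 2 ^ θ := power_self_eq hθ
  calc #(Σ ξ : (Order.succ θ).ord.ToType, Iio ξ → Ordering)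
      = sum fun ξ : (Order.succ θ).ord.ToType => #(Iio ξ → Ordering) := mk_sigma _
    _ ≤ sum fun _ : (Order.succ θ).ord.ToType => 2 ^ θ := sum_le_sum _ _ hfun
    _ = Order.succ θ * 2 ^ θ := by rw [sum_const', mk_toType, card_ord]
    _ ≤ 2 ^ θ * 2 ^ θ := mul_le_mul_left (Order.succ_le_of_lt (cantor θ)) _
    _ = 2 ^ θ := mul_eq_self (hθ.trans (cantor θ).le)

open WideOrder in
theorem stmt0 (θ : Cardinal.{u}) (hθ : Cardinal.aleph0 ≤ θ)
    (I : Type u) [LinearOrder I] (hI : 2 ^ θ < Cardinal.mk I) :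
    ∃ f : (Order.succ θ).ord.ToType → I, StrictMono f ∨ StrictAnti f := by
  have : Nonempty I := mk_ne_zero_iff.1 (zero_le.trans_lt hI).ne'
  by_cases hpicked : ∀ x : I, ∃ ξ : (Order.succ θ).ord.ToType, answer x ξ = .eq
  · choose stage hstage using hpicked
    exact absurd ((mk_le_of_injective (injective_stage_answers hstage)).trans
      (mk_sigma_Iio_arrow_ordering_le hθ)) hI.not_ge
  push Not at hpicked
  obtain ⟨x, hx⟩ := hpicked
  set O := (Order.succ θ).ord.ToType
  have hcover : {ξ : O | answer x ξ = .gt} ∪ {ξ | answer x ξ = .lt} = Set.univ :=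
    eq_univ_of_forall fun ξ => by
      cases h : answer x ξ
      exacts [Or.inr h, absurd h (hx ξ), Or.inl h]
  have hbig : Order.succ θ ≤ #({ξ | answer x ξ = .gt} ∪ {ξ | answer x ξ = .lt} : Set O) := by
    rw [hcover, mk_univ, mk_toType, card_ord]
  rcases le_mk_or_le_mk_of_le_mk_union (hθ.trans (Order.le_succ θ)) hbig with hgt | hlt
  · obtain ⟨e, he, heS⟩ := exists_strictMono_mem_of_le_mk hgt
    exact ⟨_, Or.inl fun a b hab => strictMonoOn_pick_nest x (heS a) (heS b) (he hab)⟩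
  · obtain ⟨e, he, heS⟩ := exists_strictMono_mem_of_le_mk hlt
    exact ⟨_, Or.inr fun a b hab => strictAntiOn_pick_nest x (heS a) (heS b) (he hab)⟩
end

section
/- For every linear order I₁ there exists a linear order I₂ such that: I₂ ∈ K^flin, the cardinality of I₂ equals |I₁| + ℵ₀, I₁ is (isomorphic to) a suborder of I₂ with I₁ ≤*_{K^flin} I₂, and moreover every suborder I₀ of I₁ with I₀ ∈ K^flin satisfies I₀ ≤_{K^flin} I₂. -/
/-!
Take `Q = Lex (ℕ →₀ C)`, the lexicographically ordered finitely supported sequences in a linear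
order `C` with a non-extremal zero, where `C = ℚ ⊕ₗ I₁`; `I₁` sits in `Q` as the sequences
supported at `0`. Lexicographic comparison of two sequences is decided before both vanish, so
changing a sequence beyond the supports of finitely many others does not change its position
relative to them. Hence every interval `(x, y)` contains the `#C = #Q` sequences obtained from a
point `z` of it by prescribing one late coordinate, and every point `t` outside the copy of `I₁`
shares its cut over that copy with the points obtained from `t` by appending a nonzero coordinate
and then an arbitrary one, which contain a copy of `C ⊇ I₁` and avoid the copy of `I₁`.
-/

universe u

namespace Shelah734

/-- The class `K^flin`: infinite linear orders with no first and no last element,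
all of whose nonempty open intervals have full cardinality. -/
def KflinOrder (α : Type*) [LinearOrder α] : Prop :=
  Infinite α ∧ NoMinOrder α ∧ NoMaxOrder α ∧
    ∀ a b : α, a < b → (Set.Ioo a b).Nonempty →
      Cardinal.mk (Set.Ioo a b) = Cardinal.mk α

/-- For a suborder (subset) `A` of `β`: `A ≤*_{K^flin} β`. -/
def LeStarFlin {β : Type*} [LinearOrder β] (A : Set β) : Prop :=
  A = Set.univ ∨
    ((∀ x y : β, x < y → ∃ z, z ∉ A ∧ x < z ∧ z < y) ∧
      ∀ t ∉ A,
        Nonempty (↥A ↪o ↥{s : β | s ∉ A ∧ ∀ r ∈ A, (s < r ↔ t < r)}))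

open Finsupp Cardinal

theorem KflinOrder.of_orderIso {α β : Type u} [LinearOrder α] [LinearOrder β] (e : α ≃o β)
    (h : KflinOrder α) : KflinOrder β := by
  obtain ⟨hinf, hmin, hmax, hIoo⟩ := h
  refine ⟨e.toEquiv.infinite_iff.1 hinf,
    ⟨fun b => let ⟨a, ha⟩ := exists_lt (e.symm b); ⟨e a, e.lt_symm_apply.1 ha⟩⟩,
    ⟨fun b => let ⟨a, ha⟩ := exists_gt (e.symm b); ⟨e a, e.symm_apply_lt.1 ha⟩⟩,
    fun a b hab hne => ?_⟩
  calc #(Set.Ioo a b) = #(e.symm '' Set.Ioo a b) := (mk_image_eq e.symm.injective).symm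
    _ = #(Set.Ioo (e.symm a) (e.symm b)) := by rw [e.symm.image_Ioo]
    _ = #α := hIoo _ _ (e.symm.strictMono hab) (e.symm.image_Ioo a b ▸ hne.image _)
    _ = #β := mk_congr e.toEquiv

section LexFinsupp

variable {C : Type*} [Zero C]

def bound (x : Lex (ℕ →₀ C)) : ℕ := (ofLex x).support.sup id + 1

lemma bound_pos (x : Lex (ℕ →₀ C)) : 0 < bound x := Nat.succ_pos _

lemma apply_eq_zero_of_bound_le {x : Lex (ℕ →₀ C)} {n : ℕ} (h : bound x ≤ n) :
    ofLex x n = 0 := by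
  by_contra hn
  have : n ≤ (ofLex x).support.sup id := Finset.le_sup (f := id) (mem_support_iff.2 hn)
  rw [bound] at h
  omega

noncomputable def setCoord (x : Lex (ℕ →₀ C)) (p : ℕ) (c : C) : Lex (ℕ →₀ C) :=
  toLex ((ofLex x).update p c)

@[simp]
lemma setCoord_apply_self (x : Lex (ℕ →₀ C)) (p : ℕ) (c : C) : ofLex (setCoord x p c) p = c := by
  simp [setCoord]

lemma setCoord_apply_of_ne (x : Lex (ℕ →₀ C)) {p d : ℕ} (c : C) (h : d ≠ p) :
    ofLex (setCoord x p c) d = ofLex x d := by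
  simp [setCoord, Function.update_of_ne h]

lemma setCoord_apply_of_lt (x : Lex (ℕ →₀ C)) {p d : ℕ} (c : C) (h : d < p) :
    ofLex (setCoord x p c) d = ofLex x d :=
  setCoord_apply_of_ne x c h.ne

lemma mk_lex_finsupp [Infinite C] : #(Lex (ℕ →₀ C)) = #C := by
  rw [show #(Lex (ℕ →₀ C)) = #(ℕ →₀ C) from mk_congr ofLex, mk_finsupp_lift_of_infinite']
  simp

lemma bound_toLex_single_zero (c : C) : bound (toLex (single 0 c)) ≤ 1 := by
  have : (single 0 c).support.sup id ≤ 0 :=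
    Finset.sup_le fun n hn => (Finset.mem_singleton.1 (support_single_subset hn)).le
  exact Nat.succ_le_succ this

lemma notMem_of_apply_ne_zero {A : Set (Lex (ℕ →₀ C))}
    (hA : A ⊆ Set.range fun c : C => toLex (single 0 c))
    {z : Lex (ℕ →₀ C)} {p : ℕ} (hp : p ≠ 0) (hz : ofLex z p ≠ 0) : z ∉ A := by
  rintro hzA
  obtain ⟨c, rfl⟩ := hA hzA
  exact hz (single_eq_of_ne hp)

variable [LinearOrder C]

lemma exists_lt_witness_lt_of_bound_le {x y : Lex (ℕ →₀ C)} (h : x < y) {n : ℕ}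
    (hx : bound x ≤ n) (hy : bound y ≤ n) :
    ∃ j < n, (∀ d < j, ofLex x d = ofLex y d) ∧ ofLex x j < ofLex y j := by
  obtain ⟨j, heq, hlt⟩ := Lex.lt_iff.1 h
  refine ⟨j, lt_of_not_ge fun hj => hlt.ne ?_, heq, hlt⟩
  rw [apply_eq_zero_of_bound_le (hx.trans hj), apply_eq_zero_of_bound_le (hy.trans hj)]

lemma lt_of_lt_of_eqOn_lt {x y z : Lex (ℕ →₀ C)} (h : x < y) {n : ℕ} (hx : bound x ≤ n)
    (hy : bound y ≤ n) (hz : ∀ d < n, ofLex z d = ofLex x d) : z < y := by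
  obtain ⟨j, hjn, heq, hlt⟩ := exists_lt_witness_lt_of_bound_le h hx hy
  refine Lex.lt_iff.2 ⟨j, fun d hd => ?_, ?_⟩
  · rw [hz d (hd.trans hjn)]; exact heq d hd
  · rw [hz j hjn]; exact hlt

lemma lt_of_lt_of_eqOn_lt' {x y z : Lex (ℕ →₀ C)} (h : y < x) {n : ℕ} (hx : bound x ≤ n)
    (hy : bound y ≤ n) (hz : ∀ d < n, ofLex z d = ofLex x d) : y < z := by
  obtain ⟨j, hjn, heq, hlt⟩ := exists_lt_witness_lt_of_bound_le h hy hx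
  refine Lex.lt_iff.2 ⟨j, fun d hd => ?_, ?_⟩
  · rw [hz d (hd.trans hjn)]; exact heq d hd
  · rw [hz j hjn]; exact hlt

lemma lt_setCoord {x : Lex (ℕ →₀ C)} {p : ℕ} (hp : bound x ≤ p) {c : C} (hc : 0 < c) :
    x < setCoord x p c := by
  refine Lex.lt_iff.2 ⟨p, fun d hd => (setCoord_apply_of_lt x c hd).symm, ?_⟩
  rwa [setCoord_apply_self, apply_eq_zero_of_bound_le hp]

lemma setCoord_lt {x : Lex (ℕ →₀ C)} {p : ℕ} (hp : bound x ≤ p) {c : C} (hc : c < 0) :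
    setCoord x p c < x := by
  refine Lex.lt_iff.2 ⟨p, fun d hd => setCoord_apply_of_lt x c hd, ?_⟩
  rwa [setCoord_apply_self, apply_eq_zero_of_bound_le hp]

lemma setCoord_strictMono (x : Lex (ℕ →₀ C)) (p : ℕ) : StrictMono (setCoord x p) :=
  fun c c' h => Lex.lt_iff.2 ⟨p, fun d hd => by
    rw [setCoord_apply_of_lt x c hd, setCoord_apply_of_lt x c' hd], by simpa using h⟩

lemma mk_le_mk_Ioo {x y : Lex (ℕ →₀ C)} (h : (Set.Ioo x y).Nonempty) : #C ≤ #(Set.Ioo x y) := by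
  obtain ⟨z, hxz, hzy⟩ := h
  set p := max (bound x) (max (bound y) (bound z))
  have hx : bound x ≤ p := le_max_left _ _
  have hy : bound y ≤ p := (le_max_left _ _).trans (le_max_right _ _)
  have hz : bound z ≤ p := (le_max_right _ _).trans (le_max_right _ _)
  have hmem (c : C) : setCoord z p c ∈ Set.Ioo x y :=
    ⟨lt_of_lt_of_eqOn_lt' hxz hz hx fun _ hd => setCoord_apply_of_lt z c hd,
      lt_of_lt_of_eqOn_lt hzy hz hy fun _ hd => setCoord_apply_of_lt z c hd⟩
  exact mk_le_of_injective (f := fun c => (⟨_, hmem c⟩ : Set.Ioo x y))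
    fun c c' h => (setCoord_strictMono z p).injective (congrArg Subtype.val h)

theorem kflinOrder_lex_finsupp [Infinite C] (hneg : ∃ c : C, c < 0) (hpos : ∃ c : C, 0 < c) :
    KflinOrder (Lex (ℕ →₀ C)) := by
  obtain ⟨cn, hcn⟩ := hneg
  obtain ⟨cp, hcp⟩ := hpos
  have : NoMaxOrder (Lex (ℕ →₀ C)) := ⟨fun x => ⟨_, lt_setCoord le_rfl hcp⟩⟩
  exact ⟨NoMaxOrder.infinite, ⟨fun x => ⟨_, setCoord_lt le_rfl hcn⟩⟩, this,
    fun x y _ hne => (mk_set_le _).antisymm (mk_lex_finsupp.trans_le (mk_le_mk_Ioo hne))⟩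

lemma toLex_single_zero_strictMono : StrictMono fun c : C => toLex (single 0 c) :=
  fun c c' h => Lex.lt_iff.2 ⟨0, fun _ hd => absurd hd (Nat.not_lt_zero _), by simpa using h⟩

section SupportedAtZero

variable {A : Set (Lex (ℕ →₀ C))}

lemma exists_notMem_between (hA : A ⊆ Set.range fun c : C => toLex (single 0 c))
    {c : C} (hc : 0 < c) {x y : Lex (ℕ →₀ C)} (h : x < y) :
    ∃ z, z ∉ A ∧ x < z ∧ z < y := by
  set p := max (bound x) (bound y)
  refine ⟨setCoord x p c, notMem_of_apply_ne_zero hA (p := p) ?_ ?_,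
    lt_setCoord (le_max_left _ _) hc, lt_of_lt_of_eqOn_lt h (le_max_left _ _) (le_max_right _ _)
      fun _ hd => setCoord_apply_of_lt x c hd⟩
  · exact ((bound_pos x).trans_le (le_max_left _ _)).ne'
  · simpa using hc.ne'

lemma setCoord_setCoord_mem_cut (hA : A ⊆ Set.range fun c : C => toLex (single 0 c))
    {c₀ : C} (hc₀ : c₀ ≠ 0) {t : Lex (ℕ →₀ C)} (ht : t ∉ A) (c : C) :
    setCoord (setCoord t (bound t) c₀) (bound t + 1) c ∈
      {s | s ∉ A ∧ ∀ r ∈ A, (s < r ↔ t < r)} := by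
  set s := setCoord (setCoord t (bound t) c₀) (bound t + 1) c
  have hs : ∀ d < bound t, ofLex s d = ofLex t d := fun d hd => by
    rw [setCoord_apply_of_ne _ _ (by omega), setCoord_apply_of_lt _ _ hd]
  refine ⟨notMem_of_apply_ne_zero hA (bound_pos t).ne' ?_, fun r hr => ?_⟩
  · rwa [setCoord_apply_of_ne _ _ (by omega), setCoord_apply_self]
  obtain ⟨a, rfl⟩ := hA hr
  have hbound : bound (toLex (single 0 a)) ≤ bound t :=
    (bound_toLex_single_zero a).trans (bound_pos t)
  rcases lt_or_gt_of_ne (ne_of_mem_of_not_mem hr ht).symm with hlt | hgt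
  · exact iff_of_true (lt_of_lt_of_eqOn_lt hlt le_rfl hbound hs) hlt
  · exact iff_of_false (lt_of_lt_of_eqOn_lt' hgt le_rfl hbound hs).not_gt hgt.not_gt

theorem leStarFlin_of_subset_range_single (hA : A ⊆ Set.range fun c : C => toLex (single 0 c))
    (hpos : ∃ c : C, 0 < c) : LeStarFlin A := by
  obtain ⟨c₀, hc₀⟩ := hpos
  refine Or.inr ⟨fun x y h => exists_notMem_between hA hc₀ h, fun t ht => ?_⟩
  have hhead : StrictMono fun x : A => ofLex x.1 0 := by
    rintro ⟨x, hx⟩ ⟨y, hy⟩ hxy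
    obtain ⟨a, rfl⟩ := hA hx
    obtain ⟨b, rfl⟩ := hA hy
    simpa using toLex_single_zero_strictMono.lt_iff_lt.1 hxy
  exact ⟨OrderEmbedding.ofStrictMono
    (fun x => ⟨_, setCoord_setCoord_mem_cut hA hc₀.ne' ht (ofLex x.1 0)⟩)
    fun x y hxy => setCoord_strictMono _ _ (hhead hxy)⟩

end SupportedAtZero

end LexFinsupp

abbrev Coord (I : Type u) : Type u := Lex (ℚ ⊕ I)

instance (I : Type u) : Zero (Coord I) := ⟨toLex (Sum.inl 0)⟩

instance (I : Type u) : Infinite (Coord I) :=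
  Infinite.of_injective (fun q : ℚ => toLex (Sum.inl q)) fun _ _ h => Sum.inl_injective h

lemma mk_coord (I : Type u) : #(Coord I) = #I + ℵ₀ := by
  rw [show #(Coord I) = #(ℚ ⊕ I) from mk_congr ofLex, mk_sum, add_comm]
  simp

lemma coord_exists_neg (I : Type u) [LT I] : ∃ c : Coord I, c < 0 :=
  ⟨toLex (Sum.inl (-1)), Sum.Lex.inl_lt_inl_iff.2 (by norm_num)⟩

lemma coord_exists_pos (I : Type u) [LT I] : ∃ c : Coord I, 0 < c :=
  ⟨toLex (Sum.inl 1), Sum.Lex.inl_lt_inl_iff.2 (by norm_num)⟩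

noncomputable def embed (I : Type u) (a : I) : Lex (ℕ →₀ Coord I) :=
  toLex (single 0 (toLex (Sum.inr a)))

lemma embed_strictMono (I : Type u) [LinearOrder I] : StrictMono (embed I) :=
  toLex_single_zero_strictMono.comp Sum.Lex.inr_strictMono

lemma range_embed_subset (I : Type u) :
    Set.range (embed I) ⊆ Set.range fun c : Coord I => toLex (single 0 c) :=
  Set.range_comp_subset_range (fun a : I => toLex (Sum.inr a)) fun c => toLex (single 0 c)

theorem stmt1 (I₁ : Type u) [LinearOrder I₁] :
    ∃ (I₂ : LinOrd.{u}) (A : Set I₂) (f : I₁ ≃o ↥A),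
      KflinOrder I₂ ∧
      Cardinal.mk I₂ = Cardinal.mk I₁ + Cardinal.aleph0 ∧
      LeStarFlin A ∧
      ∀ S : Set I₁, KflinOrder ↥S →
        KflinOrder ↥((fun x : I₁ => ((f x : ↥A) : I₂)) '' S) ∧
        LeStarFlin ((fun x : I₁ => ((f x : ↥A) : I₂)) '' S) := by
  have hmono := embed_strictMono I₁
  refine ⟨LinOrd.of (Lex (ℕ →₀ Coord I₁)), Set.range (embed I₁), hmono.orderIso _,
    kflinOrder_lex_finsupp (coord_exists_neg I₁) (coord_exists_pos I₁),
    mk_lex_finsupp.trans (mk_coord I₁),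
    leStarFlin_of_subset_range_single (range_embed_subset I₁) (coord_exists_pos I₁),
    fun S hS => ⟨hS.of_orderIso ((hmono.strictMonoOn S).orderIso), ?_⟩⟩
  exact leStarFlin_of_subset_range_single
    ((Set.image_subset_range _ S).trans (range_embed_subset I₁)) (coord_exists_pos I₁)

end Shelah734
end

section
/- Fix an ordinal α* ≥ 1 and subsets u⁻, u⁺ ⊆ α*, let J, I be colored linear orders and e ∈ 𝐞(J,I). Then: (0a) if t is the first element of J and t ∈ P^J_α with α ∈ u⁻, then t ∉ Dom(e); (0b) if t ∈ Dom(e) is the first element of its e-class and t ∈ P^J_α, then α ∉ u⁻; (1) if t is the immediate successor of s in J and t ∈ P^J_α with α ∈ u⁻, then s ∈ Dom(e) iff t ∈ Dom(e), and if s ∈ Dom(e) then s and t are e-equivalent; (2) if ⟨t_i : i < δ⟩ is a <_J-increasing sequence with limit t_δ in J and t_δ ∈ P^J_α with α ∈ u⁻, then: (a) if no t_i belongs to Dom(e), then t_δ ∉ Dom(e); (b) if for every i < δ there is j with i < j < δ such that t_i and t_j are not e-equivalent, then t_δ ∉ Dom(e); (c) if every t_i is e-equivalent to t₀, then t_δ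 is e-equivalent to t₀. -/
/-!
Fix an `e`-pair `(h₁, h₂)` of members of `inc_J(I)`: the maps agree exactly off `Dom(e)`, and points
in different classes have interleaved images. If `t ∈ Dom(e)` has colour in `u⁻` and, say,
`h₂ t < h₁ t`, then clause (b) of `inc` for `h₁` gives `t₁ < t` with `h₂ t ≤ h₁ t₁`, which forces
`t₁ e t`; so the class of `t` contains an interval `[t₁, t]`. If `t ∉ Dom(e)` has colour in `u⁻` and
`s < t` lies in `Dom(e)`, the same clause applied below the common value `h₁ t = h₂ t` gives some
`t₁` with `s < t₁ < t` bounding the whole class of `s`. All parts follow from these two facts and the convexity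
of the classes.
-/

universe u

namespace Shelah734

/-- Membership in `inc_J(I)` for colored linear orders given by the colorings
`cJ`, `cI`, relative to the parameter sets `um = u⁻` and `up = u⁺`. -/
def Inc {J : Type*} {I : Type*} [LinearOrder J] [LinearOrder I]
    (um up : Set Ordinal) (cJ : J → Ordinal) (cI : I → Ordinal)
    (h : J → I) : Prop :=
  StrictMono h ∧ (∀ t, cI (h t) = cJ t) ∧
    (∀ t, cJ t ∈ um → ∀ s, s < h t → ∃ t₁, t₁ < t ∧ s ≤ h t₁) ∧
    (∀ t, cJ t ∈ up → ∀ s, h t < s → ∃ t₁, t < t₁ ∧ h t₁ ≤ s)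

/-- `e ∈ 𝐞(J)` : a partial equivalence relation all of whose classes are convex. -/
def ConvexPER {J : Type*} [LinearOrder J] (e : J → J → Prop) : Prop :=
  (∀ s t, e s t → e t s) ∧ (∀ s t r, e s t → e t r → e s r) ∧
    (∀ s t r, e s t → s ≤ r → r ≤ t → e s r)

/-- The domain of a partial equivalence relation. -/
def eDom {J : Type*} (e : J → J → Prop) : Set J := {s | e s s}

/-- `Y` represents a subset of `Dom(e)/e` : an `e`-invariant subset of the domain. -/
def ClassSet {J : Type*} (e : J → J → Prop) (Y : Set J) : Prop :=
  Y ⊆ eDom e ∧ ∀ s t, e s t → (s ∈ Y ↔ t ∈ Y)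

/-- `(h₁, h₂)` is a strict `(e, Y)`-pair (with `Y` an invariant subset of the
domain representing a set `𝒴` of `e`-classes). -/
def StrictPair {J : Type*} {I : Type*} [LinearOrder J] [LinearOrder I]
    (e : J → J → Prop) (Y : Set J) (h₁ h₂ : J → I) : Prop :=
  (∀ s, ¬ e s s ↔ h₁ s = h₂ s) ∧
    (∀ s t, s < t → e s s → e t t → ¬ e s t → h₁ s < h₂ t ∧ h₂ s < h₁ t) ∧
    (∀ s t, s < t → e s t → ((h₁ t < h₂ s ↔ s ∈ Y) ∧ (s ∈ Y ↔ h₁ s < h₂ t)))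

/-- `(h₁, h₂)` is an `e`-pair. -/
def EPair {J : Type*} {I : Type*} [LinearOrder J] [LinearOrder I]
    (e : J → J → Prop) (h₁ h₂ : J → I) : Prop :=
  ∃ Y : Set J, ClassSet e Y ∧ StrictPair e Y h₁ h₂

/-- `e ∈ 𝐞(J, I)`. -/
def EJI {J : Type*} {I : Type*} [LinearOrder J] [LinearOrder I]
    (um up : Set Ordinal) (cJ : J → Ordinal) (cI : I → Ordinal)
    (e : J → J → Prop) : Prop :=
  ConvexPER e ∧
    ∃ h₁ h₂ : J → I, Inc um up cJ cI h₁ ∧ Inc um up cJ cI h₂ ∧ EPair e h₁ h₂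

/-- The quantifier-free type of a tuple of members of `inc_J(I)` :
`qftp(h₁, …, hₙ; I) = {(ℓ, m, s, t) : h_ℓ(s) <_I h_m(t)}`. -/
def qftp {J : Type*} {I : Type*} [LinearOrder I] {n : ℕ} (hs : Fin n → J → I) :
    Set (Fin n × Fin n × J × J) :=
  {q : Fin n × Fin n × J × J | hs q.1 q.2.2.1 < hs q.2.1 q.2.2.2}

/-- Restriction of a relation to a set. -/
def restrictE {J : Type*} (e : J → J → Prop) (S : Set J) : J → J → Prop :=
  fun s t => e s t ∧ s ∈ S ∧ t ∈ S

/-- `(I, J)` is a reasonable `(μ, α*)`-base. -/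
def Reasonable {J : Type*} {I : Type*} [LinearOrder J] [LinearOrder I]
    (um up : Set Ordinal) (cJ : J → Ordinal) (cI : I → Ordinal)
    (μ : Cardinal) : Prop :=
  Cardinal.mk J ≤ μ ∧ (∃ e : J → J → Prop, EJI um up cJ cI e) ∧
    ∀ e : J → J → Prop, EJI um up cJ cI e →
      ∀ h₁ h₂ : J → I, Inc um up cJ cI h₁ → Inc um up cJ cI h₂ →
        EPair e h₁ h₂ →
          ∃ h₁' h₂' h₃' : J → I, ∃ Y : Set J,
            Inc um up cJ cI h₁' ∧ Inc um up cJ cI h₂' ∧ Inc um up cJ cI h₃' ∧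
            ClassSet e Y ∧ qftp ![h₁', h₂'] = qftp ![h₁, h₂] ∧
            StrictPair e Y h₁' h₃' ∧ StrictPair e Y h₂' h₃'

/-- `(I, J)` is a wide `(λ, μ, α*)`-base. -/
def Wide {J : Type*} {I : Type*} [LinearOrder J] [LinearOrder I]
    (um up : Set Ordinal) (cJ : J → Ordinal) (cI : I → Ordinal)
    (lam μ : Cardinal) : Prop :=
  Cardinal.mk J ≤ μ ∧ (∃ e : J → J → Prop, EJI um up cJ cI e) ∧
    ∀ e : J → J → Prop, EJI um up cJ cI e →
      ∃ hs : lam.ord.ToType → J → I,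
        (∀ ξ, Inc um up cJ cI (hs ξ)) ∧
          ∀ ξ ζ, ξ < ζ → EPair e (hs ξ) (hs ζ)

/-- `E` is an invariant equivalence relation on `inc_J(I)`. -/
def InvariantER {J : Type*} {I : Type*} [LinearOrder J] [LinearOrder I]
    (um up : Set Ordinal) (cJ : J → Ordinal) (cI : I → Ordinal)
    (E : (J → I) → (J → I) → Prop) : Prop :=
  (∀ h, Inc um up cJ cI h → E h h) ∧
    (∀ h₁ h₂, Inc um up cJ cI h₁ → Inc um up cJ cI h₂ → E h₁ h₂ → E h₂ h₁) ∧
    (∀ h₁ h₂ h₃, Inc um up cJ cI h₁ → Inc um up cJ cI h₂ → Inc um up cJ cI h₃ →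
      E h₁ h₂ → E h₂ h₃ → E h₁ h₃) ∧
    (∀ h₁ h₂ h₃ h₄, Inc um up cJ cI h₁ → Inc um up cJ cI h₂ →
      Inc um up cJ cI h₃ → Inc um up cJ cI h₄ →
      qftp ![h₁, h₂] = qftp ![h₃, h₄] → (E h₁ h₂ ↔ E h₃ h₄))

/-- `E` is a non-trivial invariant equivalence relation. -/
def NonTrivialER {J : Type*} {I : Type*} [LinearOrder J] [LinearOrder I]
    (um up : Set Ordinal) (cJ : J → Ordinal) (cI : I → Ordinal)
    (E : (J → I) → (J → I) → Prop) : Prop :=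
  (∀ h₁ h₂, Inc um up cJ cI h₁ → Inc um up cJ cI h₂ →
      ({t : J | h₁ t = h₂ t}ᶜ).Finite → E h₁ h₂) ∧
    ∃ h₁ h₂, Inc um up cJ cI h₁ ∧ Inc um up cJ cI h₂ ∧ ¬ E h₁ h₂

/-- `u ∈ 𝒟_ℰ`. -/
def DEMem {J : Type*} {I : Type*} [LinearOrder J] [LinearOrder I]
    (um up : Set Ordinal) (cJ : J → Ordinal) (cI : I → Ordinal)
    (E : (J → I) → (J → I) → Prop) (u : Set J) : Prop :=
  ∀ h₁ h₂, Inc um up cJ cI h₁ → Inc um up cJ cI h₂ →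
    (∀ t ∈ u, h₁ t = h₂ t) → E h₁ h₂

/-- The subset of `Dom(e)/e` represented by the invariant set `Y` belongs to
`𝒟_{ℰ,e}`. -/
def DEeMem {J : Type*} {I : Type*} [LinearOrder J] [LinearOrder I]
    (um up : Set Ordinal) (cJ : J → Ordinal) (cI : I → Ordinal)
    (E : (J → I) → (J → I) → Prop) (e : J → J → Prop) (Y : Set J) : Prop :=
  ClassSet e Y ∧
    ∀ h₁ h₂, Inc um up cJ cI h₁ → Inc um up cJ cI h₂ →
      EPair (restrictE e (eDom e \ Y)) h₁ h₂ → E h₁ h₂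

/-- `I₁ ≤¹_J I₂`, where `I₁` is the suborder of `I₂` on the subset `A`
(with the induced order and coloring). -/
def Le1 {J : Type*} {I : Type*} [LinearOrder J] [LinearOrder I]
    (um up : Set Ordinal) (cJ : J → Ordinal) (cI : I → Ordinal)
    (A : Set I) : Prop :=
  ∀ h₁ h₂ h₃ : J → I,
    Inc um up cJ cI h₁ → Inc um up cJ cI h₂ → Inc um up cJ cI h₃ →
      ∃ h₁' h₂' h₃' : J → ↥A,
        Inc um up cJ (fun a : ↥A => cI ↑a) h₁' ∧
        Inc um up cJ (fun a : ↥A => cI ↑a) h₂' ∧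
        Inc um up cJ (fun a : ↥A => cI ↑a) h₃' ∧
        qftp ![h₁', h₂', h₃'] = qftp ![h₁, h₂, h₃]

section Pairs

variable {J I : Type*} [LinearOrder J] [LinearOrder I]
  {um up : Set Ordinal} {cJ : J → Ordinal} {cI : I → Ordinal} {e : J → J → Prop}

theorem ConvexPER.symm (he : ConvexPER e) {s t : J} (h : e s t) : e t s := he.1 s t h

theorem ConvexPER.trans (he : ConvexPER e) {s t r : J} (hst : e s t) (htr : e t r) : e s r :=
  he.2.1 s t r hst htr

theorem ConvexPER.refl_left (he : ConvexPER e) {s t : J} (h : e s t) : e s s :=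
  he.trans h (he.symm h)

theorem ConvexPER.rel_of_le_of_le (he : ConvexPER e) {s t r : J} (hst : e s t) (hsr : s ≤ r)
    (hrt : r ≤ t) : e r t :=
  he.trans (he.symm (he.2.2 s t r hst hsr hrt)) hst

/-- A weakening of `StrictPair` that, unlike it, is symmetric in `h₁, h₂`. -/
structure WeakPair (e : J → J → Prop) (h₁ h₂ : J → I) : Prop where
  not_rel_iff_eq : ∀ s, ¬ e s s ↔ h₁ s = h₂ s
  lt_of_not_rel : ∀ s t, s < t → e s s → e t t → ¬ e s t → h₁ s < h₂ t ∧ h₂ s < h₁ t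
  le_of_rel_of_lt : ∀ s r, s < r → e s r → h₁ s < h₂ s → h₁ r ≤ h₂ s
  le_of_rel_of_gt : ∀ s r, s < r → e s r → h₂ s < h₁ s → h₂ r ≤ h₁ s

theorem StrictPair.weakPair {Y : Set J} {h₁ h₂ : J → I} (hp : StrictPair e Y h₁ h₂)
    (m₁ : Monotone h₁) (m₂ : Monotone h₂) : WeakPair e h₁ h₂ where
  not_rel_iff_eq := hp.1
  lt_of_not_rel := hp.2.1
  le_of_rel_of_lt s r hsr hr hs :=
    ((hp.2.2 s r hsr hr).1.mpr ((hp.2.2 s r hsr hr).2.mpr (hs.trans_le (m₂ hsr.le)))).le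
  le_of_rel_of_gt s r hsr hr hs := le_of_not_gt fun hlt =>
    have h₁r : h₁ r < h₂ s := (hp.2.2 s r hsr hr).1.mpr ((hp.2.2 s r hsr hr).2.mpr hlt)
    (h₁r.trans (hs.trans_le (m₁ hsr.le))).false

namespace WeakPair

variable {h₁ h₂ : J → I}

theorem symm (hw : WeakPair e h₁ h₂) : WeakPair e h₂ h₁ where
  not_rel_iff_eq s := (hw.not_rel_iff_eq s).trans eq_comm
  lt_of_not_rel s t hst hs ht hn := (hw.lt_of_not_rel s t hst hs ht hn).symm
  le_of_rel_of_lt := hw.le_of_rel_of_gt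
  le_of_rel_of_gt := hw.le_of_rel_of_lt

theorem apply_eq (hw : WeakPair e h₁ h₂) {s : J} (hs : ¬ e s s) : h₁ s = h₂ s :=
  (hw.not_rel_iff_eq s).mp hs

theorem apply_ne (hw : WeakPair e h₁ h₂) {s : J} (hs : e s s) : h₁ s ≠ h₂ s :=
  fun heq => (hw.not_rel_iff_eq s).mpr heq hs

theorem rel_of_apply_le (hw : WeakPair e h₁ h₂) (m₁ : StrictMono h₁) (m₂ : StrictMono h₂)
    {s t : J} (hst : s < t) (h : h₂ t ≤ h₁ s) : e s t := by
  have hs : e s s := by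
    by_contra hs
    exact (m₂ hst).not_ge (h.trans (hw.apply_eq hs).le)
  have ht : e t t := by
    by_contra ht
    exact (m₁ hst).not_ge ((hw.apply_eq ht).le.trans h)
  by_contra hn
  exact h.not_gt (hw.lt_of_not_rel s t hst hs ht hn).1

theorem exists_lt_rel (hw : WeakPair e h₁ h₂) (inc₁ : Inc um up cJ cI h₁)
    (inc₂ : Inc um up cJ cI h₂) {t : J} (hc : cJ t ∈ um) (ht : e t t) : ∃ t₁ < t, e t₁ t := by
  wlog hlt : h₂ t < h₁ t generalizing h₁ h₂ with H
  · exact H hw.symm inc₂ inc₁ (lt_of_le_of_ne (not_lt.mp hlt) (hw.apply_ne ht))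
  obtain ⟨t₁, ht₁, hle⟩ := inc₁.2.2.1 t hc (h₂ t) hlt
  exact ⟨t₁, ht₁, hw.rel_of_apply_le inc₁.1 inc₂.1 ht₁ hle⟩

theorem exists_bound_rel (hw : WeakPair e h₁ h₂) (inc₁ : Inc um up cJ cI h₁)
    (inc₂ : Inc um up cJ cI h₂) {s t : J} (hc : cJ t ∈ um) (ht : ¬ e t t) (hs : e s s)
    (hst : s < t) : ∃ t₁, s < t₁ ∧ t₁ < t ∧ ∀ r, e s r → r ≤ t₁ := by
  wlog hlt : h₁ s < h₂ s generalizing h₁ h₂ with H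
  · exact H hw.symm inc₂ inc₁ (lt_of_le_of_ne (not_lt.mp hlt) (hw.apply_ne hs).symm)
  obtain ⟨t₁, ht₁, hle⟩ :=
    inc₁.2.2.1 t hc (h₂ s) ((inc₂.1 hst).trans_eq (hw.apply_eq ht).symm)
  have hst₁ : s < t₁ := inc₁.1.lt_iff_lt.mp (hlt.trans_le hle)
  refine ⟨t₁, hst₁, ht₁, fun r hr => le_of_not_gt fun hr₁ => ?_⟩
  exact ((hw.le_of_rel_of_lt s r (hst₁.trans hr₁) hr hlt).trans hle).not_gt (inc₁.1 hr₁)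

end WeakPair

namespace EJI

theorem exists_weakPair (he : EJI um up cJ cI e) :
    ∃ h₁ h₂ : J → I, Inc um up cJ cI h₁ ∧ Inc um up cJ cI h₂ ∧ WeakPair e h₁ h₂ := by
  obtain ⟨-, h₁, h₂, inc₁, inc₂, Y, -, hp⟩ := he
  exact ⟨h₁, h₂, inc₁, inc₂, hp.weakPair inc₁.1.monotone inc₂.1.monotone⟩

theorem exists_Icc_rel (he : EJI um up cJ cI e) {t : J} (hc : cJ t ∈ um) (ht : e t t) :
    ∃ t₁ < t, ∀ r, t₁ ≤ r → r ≤ t → e r t := by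
  obtain ⟨h₁, h₂, inc₁, inc₂, hw⟩ := he.exists_weakPair
  obtain ⟨t₁, ht₁, hrel⟩ := hw.exists_lt_rel inc₁ inc₂ hc ht
  exact ⟨t₁, ht₁, fun r h₁r hrt => he.1.rel_of_le_of_le hrel h₁r hrt⟩

theorem exists_bound_rel (he : EJI um up cJ cI e) {s t : J} (hc : cJ t ∈ um) (ht : ¬ e t t)
    (hs : e s s) (hst : s < t) : ∃ t₁, s < t₁ ∧ t₁ < t ∧ ∀ r, e s r → r ≤ t₁ := by
  obtain ⟨h₁, h₂, inc₁, inc₂, hw⟩ := he.exists_weakPair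
  exact hw.exists_bound_rel inc₁ inc₂ hc ht hs hst

theorem rel_of_covBy (he : EJI um up cJ cI e) {s t : J} (hst : s ⋖ t) (hc : cJ t ∈ um) :
    (e s s ↔ e t t) ∧ (e s s → e s t) := by
  have forward : e t t → e s t := fun ht => by
    obtain ⟨t₁, ht₁, hrel⟩ := he.exists_Icc_rel hc ht
    exact hrel s (le_of_not_gt fun h => hst.2 h ht₁) hst.1.le
  have backward : e s s → e t t := fun hs => by
    by_contra ht
    obtain ⟨t₁, hs₁, ht₁, -⟩ := he.exists_bound_rel hc ht hs hst.1
    exact hst.2 hs₁ ht₁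
  exact ⟨⟨backward, fun ht => he.1.refl_left (forward ht)⟩, fun hs => forward (backward hs)⟩

variable {ι : Type*} {t : ι → J} {tδ : J}

theorem exists_forall_rel_of_cofinal (he : EJI um up cJ cI e) (hub : ∀ i, t i ≤ tδ)
    (hcof : ∀ s < tδ, ∃ i, s ≤ t i) (hc : cJ tδ ∈ um) (hδ : e tδ tδ) :
    ∃ i, ∀ j, t i ≤ t j → e (t j) tδ := by
  obtain ⟨t₁, ht₁, hrel⟩ := he.exists_Icc_rel hc hδ
  obtain ⟨i, hi⟩ := hcof t₁ ht₁
  exact ⟨i, fun j hij => hrel _ (hi.trans hij) (hub j)⟩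

/-- If `tδ ∉ Dom(e)`, the class of the `t i` is bounded by some `t₁ < tδ`, hence by some `t i`, and
then by some `t₂` with `t i < t₂ < tδ`; but some `t j` exceeds `t₂`. -/
theorem rel_of_cofinal (he : EJI um up cJ cI e) (hub : ∀ i, t i < tδ)
    (hcof : ∀ s < tδ, ∃ i, s ≤ t i) (hc : cJ tδ ∈ um) (i₀ : ι) (hall : ∀ i, e (t i) (t i₀)) :
    e tδ (t i₀) := by
  have hper := he.1
  by_cases hδ : e tδ tδ
  · obtain ⟨i, hi⟩ := he.exists_forall_rel_of_cofinal (fun i => (hub i).le) hcof hc hδ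
    exact hper.trans (hper.symm (hi i le_rfl)) (hall i)
  obtain ⟨t₁, -, ht₁, hbound⟩ := he.exists_bound_rel hc hδ (hper.refl_left (hall i₀)) (hub i₀)
  obtain ⟨i, hi⟩ := hcof t₁ ht₁
  obtain ⟨t₂, hit₂, ht₂, -⟩ := he.exists_bound_rel hc hδ (hper.refl_left (hall i)) (hub i)
  obtain ⟨j, hj⟩ := hcof t₂ ht₂
  exact absurd (((hbound _ (hper.symm (hall j))).trans hi).trans_lt hit₂) (not_lt.mpr hj)

end EJI

end Pairs

theorem stmt6_general (um up : Set Ordinal)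
    (J I : Type*) [LinearOrder J] [LinearOrder I]
    (cJ : J → Ordinal) (cI : I → Ordinal)
    (e : J → J → Prop) (he : EJI um up cJ cI e) :
    -- (0a)
    (∀ t : J, (∀ s, ¬ s < t) → cJ t ∈ um → ¬ e t t) ∧
    -- (0b)
    (∀ t : J, e t t → (∀ s, e s t → t ≤ s) → cJ t ∉ um) ∧
    -- (1)
    (∀ s t : J, s < t → (∀ r, ¬ (s < r ∧ r < t)) → cJ t ∈ um →
      ((e s s ↔ e t t) ∧ (e s s → e s t))) ∧
    -- (2)
    (∀ (δ : Ordinal) (t : δ.ToType → J) (tδ : J),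
      StrictMono t → (∀ i, t i < tδ) → (¬ ∃ s, (∀ i, t i < s) ∧ s < tδ) →
      cJ tδ ∈ um →
        ((∀ i, ¬ e (t i) (t i)) → ¬ e tδ tδ) ∧
        ((∀ i, ∃ j, i < j ∧ ¬ e (t i) (t j)) → ¬ e tδ tδ) ∧
        (∀ i₀, (∀ i, e (t i) (t i₀)) → e tδ (t i₀))) := by
  refine ⟨fun t hmin hc ht => ?_, fun t ht hfirst hc => ?_,
    fun s t hst hbetween hc => he.rel_of_covBy ⟨hst, fun r h₁ h₂ => hbetween r ⟨h₁, h₂⟩⟩ hc,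
    fun δ t tδ hmono hub hlim hc => ?_⟩
  · obtain ⟨t₁, ht₁, -⟩ := he.exists_Icc_rel hc ht
    exact hmin t₁ ht₁
  · obtain ⟨t₁, ht₁, hrel⟩ := he.exists_Icc_rel hc ht
    exact (hfirst t₁ (hrel t₁ le_rfl ht₁.le)).not_gt ht₁
  have hcof : ∀ s < tδ, ∃ i, s ≤ t i := fun s hs => by
    by_contra! h
    exact hlim ⟨s, h, hs⟩
  have hper := he.1
  refine ⟨fun hno hδ => ?_, fun hsep hδ => ?_, he.rel_of_cofinal hub hcof hc⟩ <;>
    obtain ⟨i, hi⟩ := he.exists_forall_rel_of_cofinal (fun i => (hub i).le) hcof hc hδ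
  · exact hno i (hper.refl_left (hi i le_rfl))
  · obtain ⟨j, hij, hn⟩ := hsep i
    exact hn (hper.trans (hi i le_rfl) (hper.symm (hi j (hmono hij).le)))

theorem stmt6 (αs : Ordinal) (hαs : 1 ≤ αs)
    (um up : Set Ordinal) (hum : um ⊆ Set.Iio αs) (hup : up ⊆ Set.Iio αs)
    (J I : Type*) [LinearOrder J] [LinearOrder I]
    (cJ : J → Ordinal) (cI : I → Ordinal)
    (hcJ : ∀ x, cJ x < αs) (hcI : ∀ x, cI x < αs)
    (e : J → J → Prop) (he : EJI um up cJ cI e) :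
    -- (0a)
    (∀ t : J, (∀ s, ¬ s < t) → cJ t ∈ um → ¬ e t t) ∧
    -- (0b)
    (∀ t : J, e t t → (∀ s, e s t → t ≤ s) → cJ t ∉ um) ∧
    -- (1)
    (∀ s t : J, s < t → (∀ r, ¬ (s < r ∧ r < t)) → cJ t ∈ um →
      ((e s s ↔ e t t) ∧ (e s s → e s t))) ∧
    -- (2)
    (∀ (δ : Ordinal) (t : δ.ToType → J) (tδ : J),
      StrictMono t → (∀ i, t i < tδ) → (¬ ∃ s, (∀ i, t i < s) ∧ s < tδ) →
      cJ tδ ∈ um →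
        ((∀ i, ¬ e (t i) (t i)) → ¬ e tδ tδ) ∧
        ((∀ i, ∃ j, i < j ∧ ¬ e (t i) (t j)) → ¬ e tδ tδ) ∧
        (∀ i₀, (∀ i, e (t i) (t i₀)) → e tδ (t i₀))) :=
  stmt6_general um up J I cJ cI e he

end Shelah734
end

section
/- Fix an ordinal α* ≥ 1 and subsets u⁻, u⁺ ⊆ α*. Let J be a colored linear order and I₁ ⊆ I₂ colored linear orders (I₁ carrying the order and partition induced from I₂) such that I₁ ≤¹_J I₂ and such that every member of inc_J(I₁) is, regarded as a function into I₂, a member of inc_J(I₂). If ℰ₁ is an invariant equivalence relation on inc_J(I₁), then there is one and only one invariant equivalence relation ℰ₂ on inc_J(I₂) whose restriction to inc_J(I₁) equals ℰ₁. -/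
universe u

namespace Shelah734

/-!
An invariant relation only sees quantifier-free types of pairs, so `ℰ₂` is forced: `g₁ ℰ₂ g₂`
must hold iff `k₁ ℰ₁ k₂` for some (equivalently, by invariance of `ℰ₁`, every) pair `k₁, k₂` in
`inc_J(I₁)` of the same type as `g₁, g₂`, and `I₁ ≤¹_J I₂` provides such a pair. Conversely this
recipe defines an invariant equivalence relation: reflexivity and symmetry are immediate, and
transitivity holds because `≤¹_J` realizes the type of a whole triple `g₁, g₂, g₃` in `I₁`, so
that the two pairs to be composed are realized with a common middle member.
-/

section Qftp

variable {J I I' : Type*} [LinearOrder I] [LinearOrder I']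

lemma qftp_pair_eq_of_qftp_eq {n : ℕ} {hs : Fin n → J → I} {ks : Fin n → J → I'}
    (h : qftp hs = qftp ks) (i j : Fin n) : qftp ![hs i, hs j] = qftp ![ks i, ks j] := by
  ext ⟨l, m, s, t⟩
  have hmem := fun a b => Set.ext_iff.mp h (a, b, s, t)
  fin_cases l <;> fin_cases m <;> simpa [qftp] using hmem _ _

lemma eq_of_qftp_pair_eq_qftp_self {k₁ k₂ : J → I} {g : J → I'}
    (h : qftp ![k₁, k₂] = qftp ![g, g]) : k₁ = k₂ := by
  funext s
  have hmem := fun a b => Set.ext_iff.mp h (a, b, s, s)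
  exact le_antisymm (not_lt.mp fun hlt => lt_irrefl (g s) ((hmem 1 0).mp hlt))
    (not_lt.mp fun hlt => lt_irrefl (g s) ((hmem 0 1).mp hlt))

lemma qftp_pair_comp_of_strictMono {f : I → I'} (hf : StrictMono f) (h₁ h₂ : J → I) :
    qftp ![f ∘ h₁, f ∘ h₂] = qftp ![h₁, h₂] := by
  ext ⟨l, m, s, t⟩
  fin_cases l <;> fin_cases m <;> simp [qftp, hf.lt_iff_lt]

end Qftp

section Extension

variable {J I₁ I₂ : Type*} [LinearOrder J] [LinearOrder I₁] [LinearOrder I₂]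
  {um up : Set Ordinal} {cJ : J → Ordinal} {c₁ : I₁ → Ordinal} {c₂ : I₂ → Ordinal}

/-- `I₁ ≤¹_J I₂` for an arbitrary colored linear order `I₁`, not necessarily a suborder of `I₂`. -/
def RealizesTriples (um up : Set Ordinal) (cJ : J → Ordinal) (c₁ : I₁ → Ordinal)
    (c₂ : I₂ → Ordinal) : Prop :=
  ∀ g₁ g₂ g₃ : J → I₂,
    Inc um up cJ c₂ g₁ → Inc um up cJ c₂ g₂ → Inc um up cJ c₂ g₃ →
      ∃ k₁ k₂ k₃ : J → I₁,
        Inc um up cJ c₁ k₁ ∧ Inc um up cJ c₁ k₂ ∧ Inc um up cJ c₁ k₃ ∧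
        qftp ![k₁, k₂, k₃] = qftp ![g₁, g₂, g₃]

lemma RealizesTriples.exists_qftp_pair_eq (hreal : RealizesTriples um up cJ c₁ c₂)
    {g₁ g₂ : J → I₂} (hg₁ : Inc um up cJ c₂ g₁) (hg₂ : Inc um up cJ c₂ g₂) :
    ∃ k₁ k₂ : J → I₁, Inc um up cJ c₁ k₁ ∧ Inc um up cJ c₁ k₂ ∧
      qftp ![k₁, k₂] = qftp ![g₁, g₂] := by
  obtain ⟨k₁, k₂, _, hk₁, hk₂, _, hq⟩ := hreal g₁ g₂ g₂ hg₁ hg₂ hg₂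
  exact ⟨k₁, k₂, hk₁, hk₂, qftp_pair_eq_of_qftp_eq hq 0 1⟩

def extendER (um up : Set Ordinal) (cJ : J → Ordinal) (c₁ : I₁ → Ordinal)
    (E₁ : (J → I₁) → (J → I₁) → Prop) (g₁ g₂ : J → I₂) : Prop :=
  ∃ k₁ k₂ : J → I₁, Inc um up cJ c₁ k₁ ∧ Inc um up cJ c₁ k₂ ∧
    qftp ![k₁, k₂] = qftp ![g₁, g₂] ∧ E₁ k₁ k₂

variable {E₁ : (J → I₁) → (J → I₁) → Prop}

lemma extendER_iff (hE₁ : InvariantER um up cJ c₁ E₁) {g₁ g₂ : J → I₂} {k₁ k₂ : J → I₁}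
    (hk₁ : Inc um up cJ c₁ k₁) (hk₂ : Inc um up cJ c₁ k₂) (hq : qftp ![k₁, k₂] = qftp ![g₁, g₂]) :
    extendER um up cJ c₁ E₁ g₁ g₂ ↔ E₁ k₁ k₂ :=
  ⟨fun ⟨_, _, hl₁, hl₂, hql, hl⟩ => (hE₁.2.2.2 _ _ _ _ hl₁ hl₂ hk₁ hk₂ (hql.trans hq.symm)).mp hl,
    fun hk => ⟨k₁, k₂, hk₁, hk₂, hq, hk⟩⟩

lemma extendER_congr {g₁ g₂ g₃ g₄ : J → I₂} (hq : qftp ![g₁, g₂] = qftp ![g₃, g₄]) :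
    extendER um up cJ c₁ E₁ g₁ g₂ ↔ extendER um up cJ c₁ E₁ g₃ g₄ := by
  rw [extendER, extendER, hq]

theorem invariantER_extendER (hE₁ : InvariantER um up cJ c₁ E₁)
    (hreal : RealizesTriples um up cJ c₁ c₂) :
    InvariantER um up cJ c₂ (extendER um up cJ c₁ E₁) := by
  refine ⟨fun g hg => ?_, fun g₁ g₂ _ _ => ?_, fun g₁ g₂ g₃ hg₁ hg₂ hg₃ => ?_,
    fun g₁ g₂ g₃ g₄ _ _ _ _ => extendER_congr⟩
  · obtain ⟨k₁, k₂, hk₁, hk₂, hq⟩ := hreal.exists_qftp_pair_eq hg hg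
    obtain rfl := eq_of_qftp_pair_eq_qftp_self hq
    exact ⟨k₁, k₁, hk₁, hk₁, hq, hE₁.1 k₁ hk₁⟩
  · rintro ⟨k₁, k₂, hk₁, hk₂, hq, hk⟩
    exact ⟨k₂, k₁, hk₂, hk₁, qftp_pair_eq_of_qftp_eq hq 1 0, hE₁.2.1 k₁ k₂ hk₁ hk₂ hk⟩
  · obtain ⟨m₁, m₂, m₃, hm₁, hm₂, hm₃, hq⟩ := hreal g₁ g₂ g₃ hg₁ hg₂ hg₃
    have hq₁₂ : qftp ![m₁, m₂] = qftp ![g₁, g₂] := qftp_pair_eq_of_qftp_eq hq 0 1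
    have hq₂₃ : qftp ![m₂, m₃] = qftp ![g₂, g₃] := qftp_pair_eq_of_qftp_eq hq 1 2
    have hq₁₃ : qftp ![m₁, m₃] = qftp ![g₁, g₃] := qftp_pair_eq_of_qftp_eq hq 0 2
    rw [extendER_iff hE₁ hm₁ hm₂ hq₁₂, extendER_iff hE₁ hm₂ hm₃ hq₂₃,
      extendER_iff hE₁ hm₁ hm₃ hq₁₃]
    exact hE₁.2.2.1 m₁ m₂ m₃ hm₁ hm₂ hm₃

end Extension

section Suborder

variable {J I : Type*} [LinearOrder J] [LinearOrder I]
  {um up : Set Ordinal} {cJ : J → Ordinal} {cI : I → Ordinal} {A : Set I}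
  {E₁ : (J → ↥A) → (J → ↥A) → Prop}

lemma extendER_coe_iff (hE₁ : InvariantER um up cJ (fun a : ↥A => cI ↑a) E₁) {h₁ h₂ : J → ↥A}
    (hh₁ : Inc um up cJ (fun a : ↥A => cI ↑a) h₁) (hh₂ : Inc um up cJ (fun a : ↥A => cI ↑a) h₂) :
    extendER um up cJ (fun a : ↥A => cI ↑a) E₁ (fun t => (h₁ t : I)) (fun t => (h₂ t : I)) ↔
      E₁ h₁ h₂ :=
  extendER_iff hE₁ hh₁ hh₂ (qftp_pair_comp_of_strictMono (Subtype.strictMono_coe _) h₁ h₂).symm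

lemma InvariantER.iff_of_qftp_eq {E : (J → I) → (J → I) → Prop}
    (hE : InvariantER um up cJ cI E)
    (hsub : ∀ h : J → ↥A, Inc um up cJ (fun a : ↥A => cI ↑a) h →
      Inc um up cJ cI (fun t => (h t : I)))
    (hres : ∀ h₁ h₂ : J → ↥A, Inc um up cJ (fun a : ↥A => cI ↑a) h₁ →
      Inc um up cJ (fun a : ↥A => cI ↑a) h₂ →
        (E (fun t => (h₁ t : I)) (fun t => (h₂ t : I)) ↔ E₁ h₁ h₂))
    {g₁ g₂ : J → I} (hg₁ : Inc um up cJ cI g₁) (hg₂ : Inc um up cJ cI g₂) {k₁ k₂ : J → ↥A}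
    (hk₁ : Inc um up cJ (fun a : ↥A => cI ↑a) k₁) (hk₂ : Inc um up cJ (fun a : ↥A => cI ↑a) k₂)
    (hq : qftp ![k₁, k₂] = qftp ![g₁, g₂]) :
    E g₁ g₂ ↔ E₁ k₁ k₂ :=
  (hE.2.2.2 _ _ g₁ g₂ (hsub k₁ hk₁) (hsub k₂ hk₂) hg₁ hg₂
    ((qftp_pair_comp_of_strictMono (Subtype.strictMono_coe _) k₁ k₂).trans hq)).symm.trans
    (hres k₁ k₂ hk₁ hk₂)

end Suborder

theorem stmt10_general
    (um up : Set Ordinal)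
    (J I₂ : Type*) [LinearOrder J] [LinearOrder I₂]
    (cJ : J → Ordinal) (cI : I₂ → Ordinal)
    (A : Set I₂)
    (hsub : ∀ h : J → ↥A, Inc um up cJ (fun a : ↥A => cI ↑a) h →
      Inc um up cJ cI (fun t => (h t : I₂)))
    (hle : Le1 um up cJ cI A)
    (E₁ : (J → ↥A) → (J → ↥A) → Prop)
    (hE₁ : InvariantER um up cJ (fun a : ↥A => cI ↑a) E₁) :
    ∃ E₂ : (J → I₂) → (J → I₂) → Prop,
      (InvariantER um up cJ cI E₂ ∧
        ∀ h₁ h₂ : J → ↥A, Inc um up cJ (fun a : ↥A => cI ↑a) h₁ →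
          Inc um up cJ (fun a : ↥A => cI ↑a) h₂ →
            (E₂ (fun t => (h₁ t : I₂)) (fun t => (h₂ t : I₂)) ↔ E₁ h₁ h₂)) ∧
      ∀ E₂' : (J → I₂) → (J → I₂) → Prop,
        (InvariantER um up cJ cI E₂' ∧
          ∀ h₁ h₂ : J → ↥A, Inc um up cJ (fun a : ↥A => cI ↑a) h₁ →
            Inc um up cJ (fun a : ↥A => cI ↑a) h₂ →
              (E₂' (fun t => (h₁ t : I₂)) (fun t => (h₂ t : I₂)) ↔ E₁ h₁ h₂)) →
        ∀ g₁ g₂ : J → I₂, Inc um up cJ cI g₁ → Inc um up cJ cI g₂ →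
          (E₂ g₁ g₂ ↔ E₂' g₁ g₂) := by
  have hreal : RealizesTriples um up cJ (fun a : ↥A => cI ↑a) cI := hle
  refine ⟨extendER um up cJ (fun a : ↥A => cI ↑a) E₁,
    ⟨invariantER_extendER hE₁ hreal, fun h₁ h₂ hh₁ hh₂ => extendER_coe_iff hE₁ hh₁ hh₂⟩, ?_⟩
  rintro E₂' ⟨hE₂', hres'⟩ g₁ g₂ hg₁ hg₂
  obtain ⟨k₁, k₂, hk₁, hk₂, hq⟩ := hreal.exists_qftp_pair_eq hg₁ hg₂
  rw [extendER_iff hE₁ hk₁ hk₂ hq, hE₂'.iff_of_qftp_eq hsub hres' hg₁ hg₂ hk₁ hk₂ hq]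

theorem stmt10 (αs : Ordinal) (hαs : 1 ≤ αs)
    (um up : Set Ordinal) (hum : um ⊆ Set.Iio αs) (hup : up ⊆ Set.Iio αs)
    (J I₂ : Type*) [LinearOrder J] [LinearOrder I₂]
    (cJ : J → Ordinal) (cI : I₂ → Ordinal)
    (hcJ : ∀ x, cJ x < αs) (hcI : ∀ x, cI x < αs)
    (A : Set I₂)
    (hsub : ∀ h : J → ↥A, Inc um up cJ (fun a : ↥A => cI ↑a) h →
      Inc um up cJ cI (fun t => (h t : I₂)))
    (hle : Le1 um up cJ cI A)
    (E₁ : (J → ↥A) → (J → ↥A) → Prop)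
    (hE₁ : InvariantER um up cJ (fun a : ↥A => cI ↑a) E₁) :
    ∃ E₂ : (J → I₂) → (J → I₂) → Prop,
      (InvariantER um up cJ cI E₂ ∧
        ∀ h₁ h₂ : J → ↥A, Inc um up cJ (fun a : ↥A => cI ↑a) h₁ →
          Inc um up cJ (fun a : ↥A => cI ↑a) h₂ →
            (E₂ (fun t => (h₁ t : I₂)) (fun t => (h₂ t : I₂)) ↔ E₁ h₁ h₂)) ∧
      ∀ E₂' : (J → I₂) → (J → I₂) → Prop,
        (InvariantER um up cJ cI E₂' ∧
          ∀ h₁ h₂ : J → ↥A, Inc um up cJ (fun a : ↥A => cI ↑a) h₁ →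
            Inc um up cJ (fun a : ↥A => cI ↑a) h₂ →
              (E₂' (fun t => (h₁ t : I₂)) (fun t => (h₂ t : I₂)) ↔ E₁ h₁ h₂)) →
        ∀ g₁ g₂ : J → I₂, Inc um up cJ cI g₁ → Inc um up cJ cI g₂ →
          (E₂ g₁ g₂ ↔ E₂' g₁ g₂) :=
  stmt10_general um up J I₂ cJ cI A hsub hle E₁ hE₁

end Shelah734
end

section
/- Let α* = 1 and u⁻ = u⁺ = ∅, so that colored linear orders are just linear orders and inc_J(I) is the set of strictly order-preserving maps from J to I. Let μ be an infinite cardinal, ζ* an ordinal with μ ≤ ζ* < μ⁺, and β₁ ≤ β₂ ordinals with μ⁺ ≤ β₁. Then, with J the ordinal ζ*, I₁ the ordinal β₁ and I₂ the ordinal β₂ (all as linear orders, I₁ an initial segment of I₂), we have I₁ ≤¹_J I₂. -/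
universe u

namespace Shelah734

/-- The ordinal corresponding to an element of `β.toType`. -/
noncomputable def ordValue {β : Ordinal.{u}} (x : β.ToType) : Ordinal.{u} :=
  ((Ordinal.ToType.mk (o := β)).symm x).1

/-- The coloring of the colored linear order `I^lin_{μ,β,w}` (with `α* = 2`):
an element gets color `1` iff its ordinal value has cofinality `> μ` or lies in `w`. -/
noncomputable def IlinCol (μ : Cardinal.{u}) (β : Ordinal.{u}) (w : Set Ordinal.{u}) :
    β.ToType → Ordinal :=
  fun x =>
    haveI := Classical.propDecidable (μ < (ordValue x).cof ∨ ordValue x ∈ w)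
    if μ < (ordValue x).cof ∨ ordValue x ∈ w then 1 else 0

/-!
Only the relative order of the at most `μ` points in the ranges of `h₁, h₂, h₃` is recorded by
`qftp`. This set is well ordered of order type `< μ⁺ ≤ β₁`, so collapsing it onto its order type
moves it, order-isomorphically, into the initial segment `β₁` of `β₂`.
-/

open Cardinal Set

theorem inc_const_iff {J I : Type*} [LinearOrder J] [LinearOrder I] (c : Ordinal) (h : J → I) :
    Inc ∅ ∅ (fun _ => c) (fun _ => c) h ↔ StrictMono h :=
  ⟨fun hh => hh.1, fun hh => ⟨hh, fun _ => rfl, fun _ ht => ht.elim, fun _ ht => ht.elim⟩⟩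

theorem qftp_comp_strictMono {J I K : Type*} [LinearOrder I] [LinearOrder K] {n : ℕ}
    (hs : Fin n → J → I) {f : I → K} (hf : StrictMono f) :
    qftp (fun i => f ∘ hs i) = qftp hs := by
  ext q
  exact hf.lt_iff_lt

theorem mk_union_range_le {J I : Type u} {μ : Cardinal.{u}} (hμ : ℵ₀ ≤ μ) (hJ : #J ≤ μ)
    (h₁ h₂ h₃ : J → I) : #↥(range h₁ ∪ range h₂ ∪ range h₃) ≤ μ :=
  calc #↥(range h₁ ∪ range h₂ ∪ range h₃)
      ≤ #(range h₁) + #(range h₂) + #(range h₃) :=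
        (mk_union_le _ _).trans (by gcongr; exact mk_union_le _ _)
    _ ≤ μ + μ + μ := by gcongr <;> exact mk_range_le.trans hJ
    _ = μ := by rw [add_eq_self hμ, add_eq_self hμ]

theorem le1_of_forall_mk_le_embedding {J I : Type u} [LinearOrder J] [LinearOrder I]
    {μ : Cardinal.{u}} (hμ : ℵ₀ ≤ μ) (hJ : #J ≤ μ) (c : Ordinal) (A : Set I)
    (hA : ∀ S : Set I, #S ≤ μ → Nonempty (S ↪o A)) :
    Le1 (J := J) ∅ ∅ (fun _ => c) (fun _ => c) A := by
  intro h₁ h₂ h₃ hi₁ hi₂ hi₃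
  set S := range h₁ ∪ range h₂ ∪ range h₃
  obtain ⟨g⟩ := hA S (mk_union_range_le hμ hJ h₁ h₂ h₃)
  let k₁ : J → S := fun t => ⟨h₁ t, Or.inl (Or.inl ⟨t, rfl⟩)⟩
  let k₂ : J → S := fun t => ⟨h₂ t, Or.inl (Or.inr ⟨t, rfl⟩)⟩
  let k₃ : J → S := fun t => ⟨h₃ t, Or.inr ⟨t, rfl⟩⟩
  have hk₁ : StrictMono k₁ := (inc_const_iff c h₁).1 hi₁
  have hk₂ : StrictMono k₂ := (inc_const_iff c h₂).1 hi₂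
  have hk₃ : StrictMono k₃ := (inc_const_iff c h₃).1 hi₃
  refine ⟨g ∘ k₁, g ∘ k₂, g ∘ k₃, (inc_const_iff c _).2 (g.strictMono.comp hk₁),
    (inc_const_iff c _).2 (g.strictMono.comp hk₂), (inc_const_iff c _).2 (g.strictMono.comp hk₃),
    ?_⟩
  have hg : ![g ∘ k₁, g ∘ k₂, g ∘ k₃] = fun i => g ∘ ![k₁, k₂, k₃] i := by
    funext i
    fin_cases i <;> rfl
  have hval : ![h₁, h₂, h₃] = fun i => Subtype.val ∘ ![k₁, k₂, k₃] i := by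
    funext i
    fin_cases i <;> rfl
  rw [hg, hval, qftp_comp_strictMono _ g.strictMono,
    qftp_comp_strictMono _ (Subtype.strictMono_coe S)]

theorem ordValue_toType_mk {β : Ordinal.{u}} (a : Iio β) :
    ordValue (Ordinal.ToType.mk a) = a := by
  simp [ordValue]

noncomputable def embeddingInitialSegment {α : Type u} [LinearOrder α] [WellFoundedLT α]
    {β₁ β₂ : Ordinal.{u}}
    (hα : Ordinal.type ((· < ·) : α → α → Prop) ≤ β₁) (hβ : β₁ ≤ β₂) :
    α ↪o {x : β₂.ToType | ordValue x < β₁} :=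
  have hlt (a : α) : (Ordinal.typein (· < ·)).toRelEmbedding a < β₁ :=
    (Ordinal.typein_lt_type _ a).trans_le hα
  OrderEmbedding.ofStrictMono
    (fun a => ⟨Ordinal.ToType.mk ⟨_, (hlt a).trans_le hβ⟩, by
      show ordValue _ < β₁
      rw [ordValue_toType_mk]
      exact hlt a⟩)
    fun _ _ hab => Ordinal.ToType.mk.strictMono ((Ordinal.typein_lt_typein _).2 hab)

theorem nonempty_embedding_initialSegment_of_mk_le {μ : Cardinal.{u}} {β₁ β₂ : Ordinal.{u}}
    (hβ₁ : (Order.succ μ).ord ≤ β₁) (hβ : β₁ ≤ β₂) (S : Set β₂.ToType) (hS : #S ≤ μ) :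
    Nonempty (S ↪o {x : β₂.ToType | ordValue x < β₁}) := by
  refine ⟨embeddingInitialSegment (le_trans (le_of_lt ?_) hβ₁) hβ⟩
  rw [lt_ord, Ordinal.card_type]
  exact Order.lt_succ_of_le hS

theorem stmt12_general (μ : Cardinal.{u}) (hμ : Cardinal.aleph0 ≤ μ)
    (ζs : Ordinal.{u}) (hζ2 : ζs < (Order.succ μ).ord)
    (β₁ β₂ : Ordinal.{u}) (hβ₁ : (Order.succ μ).ord ≤ β₁) (hβ : β₁ ≤ β₂) :
    Le1 (J := ζs.ToType) (I := β₂.ToType)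
      (∅ : Set Ordinal) (∅ : Set Ordinal) (fun _ => 0) (fun _ => 0)
      {x : β₂.ToType | ordValue x < β₁} := by
  have hJ : #ζs.ToType ≤ μ := by
    rw [mk_toType]
    exact Order.lt_succ_iff.mp (lt_ord.mp hζ2)
  exact le1_of_forall_mk_le_embedding hμ hJ 0 _
    (nonempty_embedding_initialSegment_of_mk_le hβ₁ hβ)

theorem stmt12 (μ : Cardinal.{u}) (hμ : Cardinal.aleph0 ≤ μ)
    (ζs : Ordinal.{u}) (hζ1 : μ.ord ≤ ζs) (hζ2 : ζs < (Order.succ μ).ord)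
    (β₁ β₂ : Ordinal.{u}) (hβ₁ : (Order.succ μ).ord ≤ β₁) (hβ : β₁ ≤ β₂) :
    Le1 (J := ζs.ToType) (I := β₂.ToType)
      (∅ : Set Ordinal) (∅ : Set Ordinal) (fun _ => 0) (fun _ => 0)
      {x : β₂.ToType | ordValue x < β₁} :=
  stmt12_general μ hμ ζs hζ2 β₁ β₂ hβ₁ hβ

end Shelah734
end

section
/- Let α* = 2, u⁻ = {0}, u⁺ = ∅. Let μ be an infinite cardinal, ζ* an ordinal with μ ≤ ζ* < μ⁺, w ⊆ ζ*, and β₁ ≤ β₂ ordinals with μ⁺⁺ ≤ β₁. Then, with J = I^lin_{μ,ζ*,w}, I₁ = I^lin_{μ,β₁} and I₂ = I^lin_{μ,β₂} (so that I₁ is a colored suborder of I₂), we have I₁ ≤¹_J I₂. -/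
universe u

namespace Shelah734

/-!
The three maps `h₁, h₂, h₃` have at most `3 · |ζ*| ≤ μ` values in `β₂`. Collapse this set `X`
order-preservingly by recursion: a point goes just above the images of the smaller points of `X`,
plus a block of length `μ⁺` exactly when its cofinality exceeds `μ`. Since `|X| ≤ μ`, the part
below the block has cofinality `≤ μ`, so the collapse preserves colors, and by regularity of `μ⁺⁺`
it lands below `μ⁺⁺ ≤ β₁`. At a point of color `0` nothing is inserted, so every point below its
image lies below the image of a smaller point of `X`; this transfers condition (b) of `inc`.
Composing the `hᵢ` with the collapse gives maps into `I₁` with the same quantifier-free type.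
-/

open Cardinal Order Set

noncomputable def collapse (μ : Cardinal.{u}) {T : Type u} (σ : T → Ordinal.{u})
    (x : Ordinal.{u}) : Ordinal.{u} :=
  (⨆ t : {t // σ t < x}, collapse μ σ (σ t) + 1) + if μ < x.cof then (succ μ).ord else 0
termination_by x
decreasing_by exact t.2

section Collapse

variable (μ : Cardinal.{u}) {T : Type u} (σ : T → Ordinal.{u})

theorem collapse_eq (x : Ordinal.{u}) :
    collapse μ σ x =
      (⨆ t : {t // σ t < x}, collapse μ σ (σ t) + 1) + if μ < x.cof then (succ μ).ord else 0 := by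
  rw [collapse]

theorem collapse_lt_collapse {t : T} {x : Ordinal.{u}} (h : σ t < x) :
    collapse μ σ (σ t) < collapse μ σ x := by
  rw [collapse_eq μ σ x]
  exact (Ordinal.lt_iSup_add_one (fun t : {t // σ t < x} => collapse μ σ (σ t)) ⟨t, h⟩).trans_le
    le_self_add

theorem exists_le_collapse_of_lt_collapse {x s : Ordinal.{u}} (hx : x.cof ≤ μ)
    (hs : s < collapse μ σ x) : ∃ t, σ t < x ∧ s ≤ collapse μ σ (σ t) := by
  rw [collapse_eq, if_neg hx.not_gt, add_zero, Ordinal.lt_iSup_iff] at hs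
  obtain ⟨⟨t, ht⟩, hs⟩ := hs
  exact ⟨t, ht, Order.lt_add_one_iff.1 hs⟩

variable {μ σ}

theorem lt_cof_collapse_iff (hμ : ℵ₀ ≤ μ) (hT : #T ≤ μ) (x : Ordinal.{u}) :
    μ < (collapse μ σ x).cof ↔ μ < x.cof := by
  rw [collapse_eq]
  split_ifs with hx
  · have hne : (succ μ).ord ≠ 0 := (ord_pos.2 (aleph0_pos.trans_le (hμ.trans (le_succ μ)))).ne'
    rw [Ordinal.cof_add _ hne, (isRegular_succ hμ).cof_ord]
    exact iff_of_true (lt_succ μ) hx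
  · rw [add_zero]
    exact iff_of_false
      (((Ordinal.cof_iSup_add_one_le _).trans ((mk_subtype_le _).trans hT)).not_gt) hx

theorem collapse_lt_ord_succ_succ (hμ : ℵ₀ ≤ μ) (hT : #T ≤ μ) (x : Ordinal.{u}) :
    collapse μ σ x < (succ (succ μ)).ord := by
  induction x using WellFoundedLT.induction with
  | _ x ih =>
    have hμ' : ℵ₀ ≤ succ (succ μ) := hμ.trans ((le_succ μ).trans (le_succ _))
    have hsup : (⨆ t : {t // σ t < x}, collapse μ σ (σ t) + 1) < (succ (succ μ)).ord := by
      refine Ordinal.iSup_add_one_lt_of_lt_cof ?_ fun t => ih _ t.2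
      rw [(isRegular_succ (hμ.trans (le_succ μ))).cof_ord]
      exact ((mk_subtype_le _).trans hT).trans_lt ((lt_succ μ).trans (lt_succ _))
    rw [collapse_eq]
    split_ifs
    · exact Ordinal.isPrincipal_add_ord hμ' hsup (ord_lt_ord.2 (lt_succ _))
    · rwa [add_zero]

end Collapse

theorem Inc.comp {J I I' : Type*} [LinearOrder J] [LinearOrder I] [LinearOrder I']
    {um up : Set Ordinal} {cJ : J → Ordinal} {cI : I → Ordinal} {cI' : I' → Ordinal}
    {h : J → I} {Φ : I → I'} {S : Set I} (hh : Inc um up cJ cI h) (hS : ∀ t, h t ∈ S)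
    (hΦ : StrictMonoOn Φ S) (hcol : ∀ x ∈ S, cI' (Φ x) = cI x)
    (hdown : ∀ x ∈ S, cI x ∈ um → ∀ s < Φ x, ∃ y ∈ S, y < x ∧ s ≤ Φ y)
    (hup : ∀ x ∈ S, cI x ∈ up → ∀ s, Φ x < s → ∃ y ∈ S, x < y ∧ Φ y ≤ s) :
    Inc um up cJ cI' (Φ ∘ h) := by
  obtain ⟨hmono, hc, hb, ha⟩ := hh
  refine ⟨fun s t hst => hΦ (hS s) (hS t) (hmono hst), fun t => (hcol _ (hS t)).trans (hc t),
    fun t ht s hs => ?_, fun t ht s hs => ?_⟩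
  · obtain ⟨y, hy, hyt, hsy⟩ := hdown _ (hS t) ((hc t).symm ▸ ht) s hs
    obtain ⟨t₁, ht₁, hyt₁⟩ := hb t ht y hyt
    exact ⟨t₁, ht₁, hsy.trans (hΦ.monotoneOn hy (hS t₁) hyt₁)⟩
  · obtain ⟨y, hy, hty, hys⟩ := hup _ (hS t) ((hc t).symm ▸ ht) s hs
    obtain ⟨t₁, ht₁, hyt₁⟩ := ha t ht y hty
    exact ⟨t₁, ht₁, (hΦ.monotoneOn (hS t₁) hy hyt₁).trans hys⟩

theorem qftp_comp {J I I' : Type*} [LinearOrder I] [LinearOrder I'] {n : ℕ}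
    {hs : Fin n → J → I} {Φ : I → I'} {S : Set I} (hΦ : StrictMonoOn Φ S)
    (hS : ∀ i t, hs i t ∈ S) : qftp (fun i => Φ ∘ hs i) = qftp hs := by
  ext q
  exact hΦ.lt_iff_lt (hS _ _) (hS _ _)

section OrdValue

variable {β : Ordinal.{u}}

theorem ordValue_strictMono : StrictMono (ordValue (β := β)) :=
  fun _ _ h => (Ordinal.ToType.mk (o := β)).symm.strictMono h

@[simp] theorem ordValue_mk (o : Iio β) : ordValue (Ordinal.ToType.mk o) = o := by
  simp [ordValue]

theorem IlinCol_empty_eq_zero_iff {μ : Cardinal.{u}} {x : β.ToType} :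
    IlinCol μ β ∅ x = 0 ↔ (ordValue x).cof ≤ μ := by
  simp [IlinCol]

theorem IlinCol_empty_congr {μ : Cardinal.{u}} {β' : Ordinal.{u}} {x : β.ToType}
    {y : β'.ToType} (h : μ < (ordValue x).cof ↔ μ < (ordValue y).cof) :
    IlinCol μ β ∅ x = IlinCol μ β' ∅ y := by
  simp [IlinCol, h]

end OrdValue

theorem exists_collapse_below {μ : Cardinal.{u}} (hμ : ℵ₀ ≤ μ) {T : Type u} (hT : #T ≤ μ)
    {β₁ β₂ : Ordinal.{u}} (hβ₁ : (succ (succ μ)).ord ≤ β₁) (hβ : β₁ ≤ β₂) (g : T → β₂.ToType) :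
    ∃ Φ : β₂.ToType → {x : β₂.ToType | ordValue x < β₁},
      StrictMonoOn Φ (range g) ∧ (∀ x, IlinCol μ β₂ ∅ (Φ x) = IlinCol μ β₂ ∅ x) ∧
      ∀ x, IlinCol μ β₂ ∅ x = 0 → ∀ s < Φ x, ∃ y ∈ range g, y < x ∧ s ≤ Φ y := by
  set σ : T → Ordinal.{u} := fun t => ordValue (g t)
  have hlt (x : β₂.ToType) : collapse μ σ (ordValue x) < β₁ :=
    (collapse_lt_ord_succ_succ hμ hT _).trans_le hβ₁
  let Φ (x : β₂.ToType) : {x : β₂.ToType | ordValue x < β₁} :=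
    ⟨Ordinal.ToType.mk ⟨collapse μ σ (ordValue x), (hlt x).trans_le hβ⟩, by simpa using hlt x⟩
  have hΦ x : ordValue (Φ x : β₂.ToType) = collapse μ σ (ordValue x) := ordValue_mk _
  have hval : StrictMono fun a : {x : β₂.ToType | ordValue x < β₁} => ordValue (a : β₂.ToType) :=
    ordValue_strictMono.comp (Subtype.strictMono_coe _)
  refine ⟨Φ, ?_, fun x => IlinCol_empty_congr ?_, fun x hx s hs => ?_⟩
  · rintro _ ⟨t, rfl⟩ y - hty
    rw [← hval.lt_iff_lt, hΦ, hΦ]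
    exact collapse_lt_collapse μ σ (ordValue_strictMono hty)
  · rw [hΦ]
    exact lt_cof_collapse_iff hμ hT _
  · rw [← hval.lt_iff_lt, hΦ] at hs
    obtain ⟨t, hty, hst⟩ :=
      exists_le_collapse_of_lt_collapse μ σ (IlinCol_empty_eq_zero_iff.1 hx) hs
    refine ⟨g t, mem_range_self t, ordValue_strictMono.lt_iff_lt.1 hty, ?_⟩
    rwa [← hval.le_iff_le, hΦ]

theorem stmt13_general (μ : Cardinal.{u}) (hμ : Cardinal.aleph0 ≤ μ)
    (ζs : Ordinal.{u}) (hζ2 : ζs < (Order.succ μ).ord)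
    (w : Set Ordinal.{u})
    (β₁ β₂ : Ordinal.{u}) (hβ₁ : (Order.succ (Order.succ μ)).ord ≤ β₁)
    (hβ : β₁ ≤ β₂) :
    Le1 (J := ζs.ToType) (I := β₂.ToType)
      ({0} : Set Ordinal) (∅ : Set Ordinal)
      (IlinCol μ ζs w) (IlinCol μ β₂ ∅)
      {x : β₂.ToType | ordValue x < β₁} := by
  intro h₁ h₂ h₃ hI₁ hI₂ hI₃
  set hs : Fin 3 → ζs.ToType → β₂.ToType := ![h₁, h₂, h₃]
  have hInc : ∀ i, Inc {0} ∅ (IlinCol μ ζs w) (IlinCol μ β₂ ∅) (hs i) := by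
    intro i; fin_cases i <;> assumption
  have hJ : #ζs.ToType ≤ μ := by
    rw [mk_toType]; exact lt_succ_iff.1 (lt_ord.1 hζ2)
  have hT : #(Fin 3 × ζs.ToType) ≤ μ := by
    simpa using
      (mul_le_mul' ((natCast_lt_aleph0 (n := 3)).le.trans hμ) hJ).trans (mul_eq_self hμ).le
  obtain ⟨Φ, hΦ, hcol, hdown⟩ := exists_collapse_below hμ hT hβ₁ hβ fun p => hs p.1 p.2
  have hS i t : hs i t ∈ range fun p : Fin 3 × ζs.ToType => hs p.1 p.2 := ⟨(i, t), rfl⟩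
  have hIncΦ i : Inc {0} ∅ (IlinCol μ ζs w)
      (fun a : {x : β₂.ToType | ordValue x < β₁} => IlinCol μ β₂ ∅ ↑a) (Φ ∘ hs i) :=
    (hInc i).comp (hS i) hΦ (fun x _ => hcol x) (fun x _ => hdown x) fun _ _ h => h.elim
  refine ⟨Φ ∘ h₁, Φ ∘ h₂, Φ ∘ h₃, hIncΦ 0, hIncΦ 1, hIncΦ 2, ?_⟩
  rw [← qftp_comp hΦ hS]
  congr 1
  funext i
  fin_cases i <;> rfl

theorem stmt13 (μ : Cardinal.{u}) (hμ : Cardinal.aleph0 ≤ μ)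
    (ζs : Ordinal.{u}) (hζ1 : μ.ord ≤ ζs) (hζ2 : ζs < (Order.succ μ).ord)
    (w : Set Ordinal.{u}) (hw : w ⊆ Set.Iio ζs)
    (β₁ β₂ : Ordinal.{u}) (hβ₁ : (Order.succ (Order.succ μ)).ord ≤ β₁)
    (hβ : β₁ ≤ β₂) :
    Le1 (J := ζs.ToType) (I := β₂.ToType)
      ({0} : Set Ordinal) (∅ : Set Ordinal)
      (IlinCol μ ζs w) (IlinCol μ β₂ ∅)
      {x : β₂.ToType | ordValue x < β₁} :=
  stmt13_general μ hμ ζs hζ2 w β₁ β₂ hβ₁ hβ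

end Shelah734
end
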